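/- Let n ≥ 2 and consider C[z_{ij}]. For any subset B₀ ⊆ {2,...,n} with n ∈ B₀ and |B₀| = i₀, the minor p_{B₀} (the determinant of (z_{kℓ})_{k∈B₀, 1≤ℓ≤i₀}) satisfies p_{B₀}² ∈ J_{i₀}^0 · K_{i₀}, where J_{i₀}^0 = ⟨z_{n1},...,z_{n i₀}⟩ and K_{i₀} = ⟨p_B : B ⊆ {2,...,n}, |B| = i₀⟩. -/

import Mathlib

open MvPolynomial

/-- The variable `z_{ij}` in `ℂ[z_{ij} : 1 ≤ i, j ≤ n]` (`0`-based indexing). -/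
noncomputable def z0 (n : ℕ) (i j : Fin n) : MvPolynomial (Fin n × Fin n) ℂ := X (i, j)

/-- The last row index (row `n` in `1`-based indexing). -/
def rowN (n : ℕ) [NeZero n] : Fin n :=
  ⟨n - 1, Nat.sub_lt (Nat.pos_of_ne_zero (NeZero.ne n)) one_pos⟩

/-- The ideal `J_i^0 = ⟨z_{n1}, …, z_{ni}⟩`. -/
noncomputable def J0 (n : ℕ) [NeZero n] (i : ℕ) : Ideal (MvPolynomial (Fin n × Fin n) ℂ) :=
  Ideal.span {f | ∃ k : Fin n, (k : ℕ) < i ∧ f = z0 n (rowN n) k}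

/-- The ideal `K_j`, generated by the `j × j` minors `p_B` of `(z_{kℓ})` with row set
`B ⊆ {2, …, n}`, `|B| = j`, and columns `1, …, j` (for `j ≤ n` the column index
`b % n` is just `b`; `K_n = 0` since no admissible `B` exists). -/
noncomputable def K0 (n : ℕ) [NeZero n] (j : ℕ) : Ideal (MvPolynomial (Fin n × Fin n) ℂ) :=
  Ideal.span {f | ∃ B : Fin j → Fin n, StrictMono B ∧ (∀ a, 1 ≤ (B a : ℕ)) ∧
    f = Matrix.det (Matrix.of fun a b : Fin j =>
      z0 n (B a) ⟨(b : ℕ) % n, Nat.mod_lt _ (Nat.pos_of_ne_zero (NeZero.ne n))⟩)}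

theorem Matrix.det_mem_of_row_mem {R ι : Type*} [CommRing R] [Fintype ι] [DecidableEq ι]
    {I : Ideal R} (M : Matrix ι ι R) (i : ι) (hrow : ∀ j, M i j ∈ I) : M.det ∈ I := by
  rw [Matrix.det_eq_sum_mul_adjugate_row M i]
  exact Ideal.sum_mem _ fun j _ => Ideal.mul_mem_right _ _ (hrow j)

section Minors

variable {n : ℕ} [NeZero n] {i₀ : ℕ} (hin : i₀ ≤ n) (B : Fin i₀ → Fin n)

theorem det_mem_J0 (hBn : ∃ a, (B a : ℕ) = n - 1) :
    (Matrix.of fun a b : Fin i₀ => z0 n (B a) (Fin.castLE hin b)).det ∈ J0 n i₀ := by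
  obtain ⟨a, ha⟩ := hBn
  have hlast : B a = rowN n := Fin.ext ha
  refine Matrix.det_mem_of_row_mem _ a fun b => Ideal.subset_span ?_
  exact ⟨Fin.castLE hin b, b.isLt, by simp [hlast]⟩

theorem det_mem_K0 (hB : StrictMono B) (hB1 : ∀ a, 1 ≤ (B a : ℕ)) :
    (Matrix.of fun a b : Fin i₀ => z0 n (B a) (Fin.castLE hin b)).det ∈ K0 n i₀ := by
  refine Ideal.subset_span ⟨B, hB, hB1, ?_⟩
  have hcol : ∀ b : Fin i₀, Fin.castLE hin b =
      ⟨(b : ℕ) % n, Nat.mod_lt _ (Nat.pos_of_ne_zero (NeZero.ne n))⟩ := fun b =>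
    Fin.ext (Nat.mod_eq_of_lt (b.isLt.trans_le hin)).symm
  simp only [hcol]

end Minors

theorem pB0_sq_mem_general (n : ℕ) [NeZero n] (i₀ : ℕ) (hin : i₀ ≤ n)
    (B₀ : Fin i₀ → Fin n) (hB : StrictMono B₀) (hB1 : ∀ a, 1 ≤ (B₀ a : ℕ))
    (hBn : ∃ a, (B₀ a : ℕ) = n - 1) :
    (Matrix.det (Matrix.of fun a b : Fin i₀ => z0 n (B₀ a) (Fin.castLE hin b))) ^ 2 ∈
      J0 n i₀ * K0 n i₀ := by
  rw [sq]
  exact Ideal.mul_mem_mul (det_mem_J0 hin B₀ hBn) (det_mem_K0 hin B₀ hB hB1)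

/-- For any `B₀ ⊆ {2, …, n}` with `n ∈ B₀` and `|B₀| = i₀`, the square of the
minor `p_{B₀}` lies in the product ideal `J_{i₀}^0 · K_{i₀}`. -/
theorem pB0_sq_mem (n : ℕ) [NeZero n] (hn : 2 ≤ n) (i₀ : ℕ) (h1 : 1 ≤ i₀) (hin : i₀ ≤ n)
    (B₀ : Fin i₀ → Fin n) (hB : StrictMono B₀) (hB1 : ∀ a, 1 ≤ (B₀ a : ℕ))
    (hBn : ∃ a, (B₀ a : ℕ) = n - 1) :
    (Matrix.det (Matrix.of fun a b : Fin i₀ => z0 n (B₀ a) (Fin.castLE hin b))) ^ 2 ∈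
      J0 n i₀ * K0 n i₀ :=
  pB0_sq_mem_general n i₀ hin B₀ hB hB1 hBn
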